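/- arXiv:1801.00440 — 2 statements merged into one kernel-verified Lean document; each statement's English description precedes it below -/
import Mathlib

section
/- Let p be an odd prime, k, c positive integers with p ∤ c, and a, b positive integers. If 8 divides c, then the polynomial f(x,y,z) = a x² + b y² + c P_{p^k+2}(z) does not represent all sufficiently large integers over ℤ_2; that is, there exists a 2-adic integer (indeed a residue class modulo 8) not represented by f over ℤ_2. -/
theorem not_locally_universal_of_eight_dvd (a b c k p : ℕ)
    (ha : 0 < a) (hb : 0 < b) (hc : 0 < c) (hk : 0 < k)
    (hp : p.Prime) (hodd : Odd p) (hpc : ¬ p ∣ c) (h8 : 8 ∣ c) :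
    ∃ t : ℤ_[2], ∀ x y z : ℤ_[2],
      2 * t ≠ 2 * (a : ℤ_[2]) * x ^ 2 + 2 * (b : ℤ_[2]) * y ^ 2 +
        (c : ℤ_[2]) * ((p : ℤ_[2]) ^ k * z ^ 2 - ((p : ℤ_[2]) ^ k - 2) * z) := by
  have key : ∀ A B : ZMod (2^3), ∃ T : ZMod (2^3),
      ∀ u v : ZMod (2^3), T ≠ A * u ^ 2 + B * v ^ 2 := by decide
  obtain ⟨T, hT⟩ := key (a : ZMod (2^3)) (b : ZMod (2^3))
  refine ⟨(T.val : ℤ_[2]), fun x y z heq => ?_⟩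
  obtain ⟨c', hc'⟩ := h8
  -- 2 ∣ z^2 - z
  have hz : (2 : ℤ_[2]) ∣ z ^ 2 - z := by
    have h0 : (PadicInt.toZMod (z ^ 2 - z) : ZMod 2) = 0 := by
      have hall : ∀ u : ZMod 2, u ^ 2 - u = 0 := by decide
      have := hall (PadicInt.toZMod z)
      simpa [map_sub, map_pow] using this
    have : z ^ 2 - z ∈ RingHom.ker (PadicInt.toZMod : ℤ_[2] →+* ZMod 2) := h0
    rwa [PadicInt.ker_toZMod, PadicInt.maximalIdeal_eq_span_p,
      Ideal.mem_span_singleton] at this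
  obtain ⟨w, hw⟩ := hz
  have hc2 : (c : ℤ_[2]) = 8 * (c' : ℤ_[2]) := by exact_mod_cast hc'
  have h16 : (c : ℤ_[2]) * ((p : ℤ_[2]) ^ k * z ^ 2 - ((p : ℤ_[2]) ^ k - 2) * z)
      = 8 * (2 * ((c' : ℤ_[2]) * ((p : ℤ_[2]) ^ k * w + z))) := by
    linear_combination ((p : ℤ_[2]) ^ k * z ^ 2 - ((p : ℤ_[2]) ^ k - 2) * z) * hc2 +
      8 * (c' : ℤ_[2]) * (p : ℤ_[2]) ^ k * hw
  have h2ne : (2 : ℤ_[2]) ≠ 0 := two_ne_zero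
  have hdiv : ((T.val : ℕ) : ℤ_[2]) - (a : ℤ_[2]) * x ^ 2 - (b : ℤ_[2]) * y ^ 2
      = 8 * ((c' : ℤ_[2]) * ((p : ℤ_[2]) ^ k * w + z)) := by
    apply mul_left_cancel₀ h2ne
    linear_combination heq + h16
  have hmap := congrArg (PadicInt.toZModPow 3) hdiv
  simp only [map_sub, map_mul, map_pow, map_natCast, map_ofNat] at hmap
  have h8z : ((8 : ZMod (2^3))) = 0 := by decide
  rw [h8z, zero_mul, sub_sub, sub_eq_zero] at hmap
  have hTval : ((T.val : ℕ) : ZMod (2^3)) = T := ZMod.natCast_rightInverse T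
  rw [hTval] at hmap
  exact hT _ _ hmap
end

section
/- Let a, b, c, k be positive integers, p an odd prime with p ∤ c and gcd(a, b, c) = 1, and suppose f(x,y,z) = a x² + b y² + c P_{p^k+2}(z) is almost universal (represents all but finitely many positive integers over ℤ). Then 8 does not divide c. -/
lemma zmod8_missed : ∀ A B : ZMod 8, (A.val % 2 = 1 ∨ B.val % 2 = 1) →
    ∃ r : ZMod 8, ∀ x y : ZMod 8, A * x ^ 2 + B * y ^ 2 ≠ r := by decide

theorem eight_not_dvd_of_almost_universal (a b c k p : ℕ)
    (ha : 0 < a) (hb : 0 < b) (hc : 0 < c) (hk : 0 < k)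
    (hp : p.Prime) (hodd : Odd p) (hpc : ¬ p ∣ c)
    (hgcd : Nat.gcd (Nat.gcd a b) c = 1)
    (hau : {n : ℕ | 0 < n ∧ ¬ ∃ x y z : ℤ,
      2 * (n : ℤ) = 2 * a * x ^ 2 + 2 * b * y ^ 2 +
        c * ((p : ℤ) ^ k * z ^ 2 - ((p : ℤ) ^ k - 2) * z)}.Finite) :
    ¬ (8 ∣ c) := by
  intro h8
  obtain ⟨c', rfl⟩ := h8
  -- not both a, b even
  have hab : a % 2 = 1 ∨ b % 2 = 1 := by
    by_contra h
    push_neg at h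
    have h2a : 2 ∣ a := Nat.dvd_of_mod_eq_zero (by omega)
    have h2b : 2 ∣ b := Nat.dvd_of_mod_eq_zero (by omega)
    have : (2 : ℕ) ∣ 1 := hgcd ▸ Nat.dvd_gcd (Nat.dvd_gcd h2a h2b) ⟨4 * c', by ring⟩
    omega
  have hab' : ((a : ZMod 8)).val % 2 = 1 ∨ ((b : ZMod 8)).val % 2 = 1 := by
    rw [ZMod.val_natCast, ZMod.val_natCast, Nat.mod_mod_of_dvd a (by norm_num),
      Nat.mod_mod_of_dvd b (by norm_num)]
    exact hab
  obtain ⟨r, hr⟩ := zmod8_missed (a : ZMod 8) (b : ZMod 8) hab'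
  -- r ≠ 0
  have hr0 : r ≠ 0 := fun h => hr 0 0 (by simp [h])
  have hrval : 0 < r.val := Nat.pos_of_ne_zero fun h => hr0 ((ZMod.val_eq_zero r).mp h)
  refine (Set.infinite_of_injective_forall_mem
    (f := fun m : ℕ => 8 * m + r.val) ?_ ?_).elim hau
  · intro m₁ m₂ h; simp only at h; omega
  · intro m
    simp only [Set.mem_setOf_eq]
    refine ⟨by omega, ?_⟩
    rintro ⟨x, y, z, heq⟩
    -- z^2 - z is even
    obtain ⟨w, hw⟩ : Even (z ^ 2 - z) := by
      have := Int.even_mul_succ_self (z - 1)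
      obtain ⟨t, ht⟩ := this
      exact ⟨t, by linarith [ht, sq_nonneg z]⟩
    -- n = a x² + b y² + 8 * (...)
    have key : (↑(8 * m + r.val) : ℤ) =
        (a : ℤ) * x ^ 2 + (b : ℤ) * y ^ 2 + 8 * ((c' : ℤ) * ((p : ℤ) ^ k * w + z)) := by
      have h1 : (p : ℤ) ^ k * z ^ 2 - ((p : ℤ) ^ k - 2) * z
          = (p : ℤ) ^ k * (z ^ 2 - z) + 2 * z := by ring
      push_cast at heq ⊢
      rw [h1, hw] at heq
      linarith
    have key8 := congrArg (fun t : ℤ => (t : ZMod 8)) key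
    push_cast at key8
    simp only [ZMod.natCast_self, zero_mul, mul_zero, add_zero, zero_add,
      ZMod.natCast_val, ZMod.cast_id] at key8
    have h80 : (8 : ZMod 8) = 0 := by decide
    rw [h80] at key8
    simp only [zero_mul, mul_zero, add_zero, zero_add] at key8
    exact hr (x : ZMod 8) (y : ZMod 8) key8.symm
end
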